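/- arXiv:1608.04558 — 3 statements merged into one kernel-verified Lean document; each statement's English description precedes it below -/
import Mathlib

section
/- Let $\mu_t$ be a Gibbs measure on $\Sigma$ for the potential $\varphi_t(\mathbf{i}) = \log(\|A_{i_1}|E(\sigma\mathbf{i})\|^t \lambda_{i_1}^{-P(t)})$, i.e. there exists $C(t) > 1$ such that $C(t)^{-1} \leq \mu_t([\mathbf{i}|_n]) / (\|A_{\mathbf{i}|_n}|E(\sigma^n\mathbf{i})\|^t \lambda_{\mathbf{i}|_n}^{-P(t)}) \leq C(t)$ for all $\mathbf{i}$ and $n$. Suppose additionally there is $C'>0$ with $C'\|A_{\mathbf{i}|_n}\| \leq \|A_{\mathbf{i}|_n}|E(\sigma^n\mathbf{i})\| \leq \|A_{\mathbf{i}|_n}\|$. Then for every $\alpha \in \mathbb{R}$ and every $t \geq 0$, the set $\{\mathbf{i}\in\Sigma : \liminf_{m\to\infty} \log\|A_{\mathbf{i}|_m}\| / \log\lambda_{\mathbf{i}|_m} \leq \alpha\}$ has Hausdorff dimension (with respect to the metric $d(\mathbf{i},\mathbf{j}) = \lambda_{\mathbf{i}|_{\mathbf{i}\wedge\mathbf{j}}}$)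 at most $t\alpha - P(t)$. -/
open Matrix Filter MeasureTheory Set Classical

/-- The product `A_{i₁} ⋯ A_{i_n}` of the first `n` matrices along `𝐢`. -/
noncomputable def prefixProd {d N : ℕ} (A : Fin N → Matrix (Fin d) (Fin d) ℝ)
    (i : ℕ → Fin N) (n : ℕ) : Matrix (Fin d) (Fin d) ℝ :=
  (List.ofFn fun k : Fin n => A (i k)).prod

/-- Operator norm of a matrix acting on Euclidean space. -/
noncomputable def opN {d : ℕ} (A : Matrix (Fin d) (Fin d) ℝ) : ℝ :=
  ‖(LinearMap.toContinuousLinearMap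
      (Matrix.toEuclideanLin A : EuclideanSpace ℝ (Fin d) →ₗ[ℝ] EuclideanSpace ℝ (Fin d)))‖

/-- The norm of `A` restricted to a subspace `θ`; for one-dimensional `θ = ⟨v⟩` this is
`‖A v‖ / ‖v‖`. -/
noncomputable def restrNorm {d : ℕ} (A : Matrix (Fin d) (Fin d) ℝ)
    (θ : Submodule ℝ (Fin d → ℝ)) : ℝ :=
  sSup {r : ℝ | ∃ v ∈ θ, v ≠ 0 ∧ r = ‖A.mulVec v‖ / ‖v‖}

/-- The shift `σ^k`. -/
def shiftk {N : ℕ} (k : ℕ) (i : ℕ → Fin N) : ℕ → Fin N := fun m => i (m + k)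

/-- Length of the longest common prefix of two distinct sequences. -/
noncomputable def wedge {N : ℕ} (i j : ℕ → Fin N) : ℕ := sInf {n | i n ≠ j n}

open scoped ENNReal NNReal Topology

/-!
Fix `β > α` and put `s = tβ - P(t)`. Since `‖A_{𝐢|n}‖` decays at most exponentially, every `𝐢` in
the set has infinitely many `n` with `‖A_{𝐢|n}‖ ≥ λ_{𝐢|n}^β`, and for those `n` the Gibbs property
together with `‖A_{𝐢|n}|E(σⁿ𝐢)‖ ≥ C'‖A_{𝐢|n}‖` gives `μ_t[𝐢|n] ≳ λ_{𝐢|n}^s ≥ diam [𝐢|n]^s`.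
For each `n`, the shortest such cylinders of length at least `n` are pairwise disjoint and cover
the set, so for `d > s` their `d`-dimensional sum is `≲ (max λ_i)^{n(d-s)} → 0`. Hence
`dim_H ≤ max(s, 0)`, and letting `β ↓ α` gives the bound.
-/

lemma exists_forall_le_lt_one {ι : Type*} [Fintype ι] [Nontrivial ι] {lam : ι → ℝ}
    (hpos : ∀ k, 0 < lam k) (hsum : ∑ k, lam k = 1) :
    ∃ ρ, 0 < ρ ∧ ρ < 1 ∧ ∀ k, lam k ≤ ρ := by
  obtain ⟨k₀, hk₀⟩ := Finite.exists_max lam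
  obtain ⟨k₁, hk₁⟩ := exists_ne k₀
  refine ⟨lam k₀, hpos k₀, ?_, hk₀⟩
  rw [← hsum]
  exact Finset.single_lt_sum hk₁ (Finset.mem_univ _) (Finset.mem_univ _) (hpos k₁)
    fun k _ _ => (hpos k).le

lemma log_div_log_le_of_pow_le {κ ρ a L : ℝ} {n : ℕ} (hn : n ≠ 0) (hκ0 : 0 < κ) (hκ1 : κ ≤ 1)
    (hρ0 : 0 < ρ) (hρ1 : ρ < 1) (ha : κ ^ n ≤ a) (hL0 : 0 < L) (hL : L ≤ ρ ^ n) :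
    Real.log a / Real.log L ≤ Real.log κ / Real.log ρ := by
  have hlogρ : Real.log ρ < 0 := Real.log_neg hρ0 hρ1
  have hlogL : Real.log L < 0 := Real.log_neg hL0 (hL.trans_lt (pow_lt_one₀ hρ0.le hρ1 hn))
  have hB : 0 ≤ Real.log κ / Real.log ρ :=
    div_nonneg_of_nonpos (Real.log_nonpos hκ0.le hκ1) hlogρ.le
  rw [div_le_iff_of_neg hlogL]
  calc Real.log κ / Real.log ρ * Real.log L
      ≤ Real.log κ / Real.log ρ * Real.log (ρ ^ n) :=
        mul_le_mul_of_nonneg_left (Real.log_le_log hL0 hL) hB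
    _ = Real.log (κ ^ n) := by
        rw [Real.log_pow, Real.log_pow]; field_simp [hlogρ.ne]
    _ ≤ Real.log a := Real.log_le_log (by positivity) ha

lemma frequently_rpow_le_of_liminf_log_div_log_lt {κ ρ β : ℝ} {a L : ℕ → ℝ} (hκ0 : 0 < κ)
    (hκ1 : κ ≤ 1) (hρ0 : 0 < ρ) (hρ1 : ρ < 1) (ha : ∀ n, κ ^ n ≤ a n) (hL0 : ∀ n, 0 < L n)
    (hL : ∀ n, L n ≤ ρ ^ n)
    (hlim : liminf (fun n => Real.log (a n) / Real.log (L n)) atTop < β) :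
    ∃ᶠ n in atTop, L n ^ β ≤ a n := by
  -- an upper bound is needed: the `liminf` of a sequence unbounded above is a junk value
  have hbdd : IsCoboundedUnder (· ≥ ·) atTop fun n => Real.log (a n) / Real.log (L n) :=
    isCoboundedUnder_ge_of_eventually_le atTop <| (eventually_ne_atTop 0).mono fun n hn =>
      log_div_log_le_of_pow_le hn hκ0 hκ1 hρ0 hρ1 (ha n) (hL0 n) (hL n)
  refine ((frequently_lt_of_liminf_lt hbdd hlim).and_eventually (eventually_ne_atTop 0)).mono ?_
  rintro n ⟨hlt, hn⟩
  have hlogL : Real.log (L n) < 0 :=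
    Real.log_neg (hL0 n) ((hL n).trans_lt (pow_lt_one₀ hρ0.le hρ1 hn))
  have ha0 : 0 < a n := (pow_pos hκ0 n).trans_le (ha n)
  rw [div_lt_iff_of_neg hlogL, ← Real.log_rpow (hL0 n)] at hlt
  exact ((Real.log_lt_log_iff (Real.rpow_pos_of_pos (hL0 n) β) ha0).mp hlt).le

namespace PiNat

variable {α : Type*}

lemma countable_setOf_cylinder [Countable α] :
    {U : Set (ℕ → α) | ∃ x k, U = cylinder x k}.Countable := by
  refine (countable_range fun p : ℕ × List α => {y : ℕ → α | res y p.1 = p.2}).mono ?_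
  rintro _ ⟨x, k, rfl⟩
  exact ⟨(k, res x k), (cylinder_eq_res x k).symm⟩

lemma measurableSet_cylinder [MeasurableSpace α] [MeasurableSingletonClass α] (x : ℕ → α)
    (k : ℕ) : MeasurableSet (cylinder x k) := by
  rw [cylinder_eq_pi]
  exact MeasurableSet.pi (Finset.range k).countable_toSet fun i _ => measurableSet_singleton _

lemma cylinder_eq_of_minimal {p : Set (ℕ → α) → Prop} {n a b : ℕ} {x y z : ℕ → α}
    (hab : a ≤ b) (hna : n ≤ a) (hpa : p (cylinder x a))
    (hmin : ∀ l, n ≤ l → l < b → ¬ p (cylinder y l))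
    (hzx : z ∈ cylinder x a) (hzy : z ∈ cylinder y b) : cylinder x a = cylinder y b := by
  have hyx : cylinder y a = cylinder x a :=
    (mem_cylinder_iff_eq.mp (cylinder_anti y hab hzy)).symm.trans (mem_cylinder_iff_eq.mp hzx)
  obtain rfl : a = b := hab.antisymm (not_lt.mp fun hlt => hmin a hna hlt (hyx ▸ hpa))
  exact hyx.symm

lemma exists_pairwiseDisjoint_cylinder_cover [Countable α] (p : Set (ℕ → α) → Prop)
    {S : Set (ℕ → α)} (hS : ∀ x ∈ S, ∃ᶠ k in atTop, p (cylinder x k)) (n : ℕ) :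
    ∃ ℱ : Set (Set (ℕ → α)), ℱ.Countable ∧ ℱ.PairwiseDisjoint id ∧ S ⊆ ⋃₀ ℱ ∧
      ∀ U ∈ ℱ, p U ∧ ∃ x k, n ≤ k ∧ U = cylinder x k := by
  set ℱ := {U | ∃ x k, n ≤ k ∧ p (cylinder x k) ∧ (∀ l, n ≤ l → l < k → ¬ p (cylinder x l)) ∧
    U = cylinder x k}
  refine ⟨ℱ, countable_setOf_cylinder.mono ?_, ?_, ?_, ?_⟩
  · rintro _ ⟨x, k, -, -, -, rfl⟩
    exact ⟨x, k, rfl⟩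
  · rintro _ ⟨x, a, hna, hpa, hmina, rfl⟩ _ ⟨y, b, hnb, hpb, hminb, rfl⟩ hne
    refine Set.disjoint_left.mpr fun z hzx hzy => hne ?_
    rcases le_total a b with hab | hba
    · exact cylinder_eq_of_minimal hab hna hpa hminb hzx hzy
    · exact (cylinder_eq_of_minimal hba hnb hpb hmina hzy hzx).symm
  · intro x hx
    have hex : ∃ k, n ≤ k ∧ p (cylinder x k) := (hS x hx).forall_exists_of_atTop n
    obtain ⟨hn, hp⟩ := Nat.find_spec hex
    exact ⟨_, ⟨x, _, hn, hp, fun l hnl hl hpl => Nat.find_min hex hl ⟨hnl, hpl⟩, rfl⟩,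
      self_mem_cylinder x _⟩
  · rintro _ ⟨x, k, hnk, hp, -, rfl⟩
    exact ⟨hp, x, k, hnk, rfl⟩

end PiNat

lemma tsum_ediam_rpow_le {X : Type*} [EMetricSpace X] {_ : MeasurableSpace X} (μ : Measure X)
    {ℱ : Set (Set X)} (hcount : ℱ.Countable) (hdisj : ℱ.PairwiseDisjoint id)
    (hmeas : ∀ U ∈ ℱ, MeasurableSet U) {r c : ℝ≥0∞} {s d : ℝ} (hs : 0 ≤ s) (hsd : s ≤ d)
    (hdiam : ∀ U ∈ ℱ, Metric.ediam U ≤ r) (hmass : ∀ U ∈ ℱ, Metric.ediam U ^ s ≤ c * μ U) :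
    ∑' U : ℱ, Metric.ediam (U : Set X) ^ d ≤ r ^ (d - s) * (c * μ univ) := by
  have hterm : ∀ U ∈ ℱ, Metric.ediam U ^ d ≤ r ^ (d - s) * (c * μ U) := fun U hU =>
    calc Metric.ediam U ^ d = Metric.ediam U ^ (d - s) * Metric.ediam U ^ s := by
          rw [← ENNReal.rpow_add_of_nonneg _ _ (sub_nonneg.mpr hsd) hs, sub_add_cancel]
      _ ≤ r ^ (d - s) * (c * μ U) :=
          mul_le_mul' (ENNReal.rpow_le_rpow (hdiam U hU) (sub_nonneg.mpr hsd)) (hmass U hU)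
  calc ∑' U : ℱ, Metric.ediam (U : Set X) ^ d ≤ ∑' U : ℱ, r ^ (d - s) * (c * μ U) :=
        ENNReal.tsum_le_tsum fun U => hterm U U.2
    _ = r ^ (d - s) * (c * μ (⋃₀ ℱ)) := by
        rw [ENNReal.tsum_mul_left, ENNReal.tsum_mul_left, measure_sUnion hcount hdisj hmeas]
    _ ≤ r ^ (d - s) * (c * μ univ) := by
        gcongr
        exact subset_univ _

lemma hausdorffMeasure_eq_zero_of_tendsto_tsum {X : Type*} [EMetricSpace X] [MeasurableSpace X]
    [BorelSpace X] {d : ℝ} {S : Set X} {ℱ : ℕ → Set (Set X)} {r : ℕ → ℝ≥0∞}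
    (hcount : ∀ n, (ℱ n).Countable) (hcover : ∀ n, S ⊆ ⋃₀ ℱ n) (hr : Tendsto r atTop (𝓝 0))
    (hdiam : ∀ n, ∀ U ∈ ℱ n, Metric.ediam U ≤ r n)
    (hsum : Tendsto (fun n => ∑' U : ℱ n, Metric.ediam (U : Set X) ^ d) atTop (𝓝 0)) :
    μH[d] S = 0 := by
  have : ∀ n, Countable (ℱ n) := fun n => (hcount n).to_subtype
  refine le_antisymm ?_ bot_le
  refine (Measure.hausdorffMeasure_le_liminf_tsum d S r hr (fun n (U : ℱ n) => (U : Set X))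
    (Eventually.of_forall fun n U => hdiam n U U.2)
    (Eventually.of_forall fun n => ?_)).trans_eq hsum.liminf_eq
  rw [← sUnion_eq_iUnion]
  exact hcover n

theorem dimH_le_of_frequently_ediam_rpow_le_measure_cylinder {α : Type*} [Countable α]
    [MeasurableSpace α] [MeasurableSingletonClass α] [EMetricSpace (ℕ → α)]
    (μ : Measure (ℕ → α)) [IsFiniteMeasure μ] {ρ : ℝ≥0∞} (hρ : ρ < 1)
    (hdiam : ∀ (x : ℕ → α) k, Metric.ediam (PiNat.cylinder x k) ≤ ρ ^ k) {c : ℝ≥0∞}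
    (hc : c ≠ ∞) {s : ℝ≥0} {S : Set (ℕ → α)}
    (hS : ∀ x ∈ S, ∃ᶠ k in atTop,
      Metric.ediam (PiNat.cylinder x k) ^ (s : ℝ) ≤ c * μ (PiNat.cylinder x k)) :
    dimH S ≤ s := by
  choose ℱ hcount hdisj hcover hgood using
    PiNat.exists_pairwiseDisjoint_cylinder_cover (fun U => Metric.ediam U ^ (s : ℝ) ≤ c * μ U) hS
  have hmeas : ∀ n, ∀ U ∈ ℱ n, MeasurableSet U := fun n U hU => by
    obtain ⟨-, x, k, -, rfl⟩ := hgood n U hU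
    exact PiNat.measurableSet_cylinder x k
  have hdiamℱ : ∀ n, ∀ U ∈ ℱ n, Metric.ediam U ≤ ρ ^ n := fun n U hU => by
    obtain ⟨-, x, k, hnk, rfl⟩ := hgood n U hU
    exact (hdiam x k).trans (pow_le_pow_right_of_le_one' hρ.le hnk)
  -- `μ` lives on the product σ-algebra, `μH` on the Borel one of the metric: `hmeas` is for `μ`
  borelize (ℕ → α)
  refine dimH_le fun d hd => not_lt.mp fun hsd => ?_
  have hsd' : 0 < (d : ℝ) - s := sub_pos.mpr (by exact_mod_cast hsd)
  have hsum : ∀ n, ∑' U : ℱ n, Metric.ediam (U : Set (ℕ → α)) ^ (d : ℝ)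
      ≤ (ρ ^ ((d : ℝ) - s)) ^ n * (c * μ univ) := fun n => by
    rw [← ENNReal.rpow_mul_natCast, mul_comm ((d : ℝ) - s), ENNReal.rpow_natCast_mul]
    exact tsum_ediam_rpow_le μ (hcount n) (hdisj n) (hmeas n) s.coe_nonneg
      (by exact_mod_cast hsd.le) (hdiamℱ n) fun U hU => (hgood n U hU).1
  have hlim : Tendsto (fun n => (ρ ^ ((d : ℝ) - s)) ^ n * (c * μ univ)) atTop (𝓝 0) := by
    simpa using ENNReal.Tendsto.mul_const
      (ENNReal.tendsto_pow_atTop_nhds_zero_of_lt_one (ENNReal.rpow_lt_one hρ hsd'))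
      (Or.inr (ENNReal.mul_ne_top hc (measure_ne_top μ univ)))
  have hzero : μH[d] S = 0 :=
    hausdorffMeasure_eq_zero_of_tendsto_tsum hcount hcover
      (ENNReal.tendsto_pow_atTop_nhds_zero_of_lt_one hρ) hdiamℱ
      (tendsto_of_tendsto_of_tendsto_of_le_of_le tendsto_const_nhds hlim (fun _ => bot_le) hsum)
  exact ENNReal.zero_ne_top (hzero ▸ hd)

section OperatorNorm

variable {d N : ℕ}

lemma opN_eq_norm_toEuclideanCLM (M : Matrix (Fin d) (Fin d) ℝ) :
    opN M = ‖Matrix.toEuclideanCLM (𝕜 := ℝ) M‖ :=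
  congrArg norm (ContinuousLinearMap.coe_injective (coe_toEuclideanCLM_eq_toEuclideanLin M).symm)

lemma opN_nonneg (M : Matrix (Fin d) (Fin d) ℝ) : 0 ≤ opN M := norm_nonneg _

lemma opN_mul_le (M M' : Matrix (Fin d) (Fin d) ℝ) : opN (M * M') ≤ opN M * opN M' := by
  simp only [opN_eq_norm_toEuclideanCLM, map_mul]
  exact norm_mul_le _ _

lemma opN_one (hd : 0 < d) : opN (1 : Matrix (Fin d) (Fin d) ℝ) = 1 := by
  have : Nonempty (Fin d) := ⟨⟨0, hd⟩⟩
  rw [opN_eq_norm_toEuclideanCLM, map_one, norm_one]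

lemma prefixProd_zero (A : Fin N → Matrix (Fin d) (Fin d) ℝ) (i : ℕ → Fin N) :
    prefixProd A i 0 = 1 := by
  simp [prefixProd]

lemma prefixProd_succ (A : Fin N → Matrix (Fin d) (Fin d) ℝ) (i : ℕ → Fin N) (n : ℕ) :
    prefixProd A i (n + 1) = prefixProd A i n * A (i n) := by
  rw [prefixProd, prefixProd, List.ofFn_succ']
  simp

lemma pow_le_opN_prefixProd (hd : 0 < d) {A : Fin N → Matrix (Fin d) (Fin d) ℝ}
    (hinv : ∀ k, IsUnit (A k)) {κ : ℝ} (hκ : 0 ≤ κ) (hκA : ∀ k, κ * opN (A k)⁻¹ ≤ 1)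
    (i : ℕ → Fin N) (n : ℕ) : κ ^ n ≤ opN (prefixProd A i n) := by
  induction n with
  | zero => rw [prefixProd_zero, opN_one hd, pow_zero]
  | succ n ih =>
    have hdet := (Matrix.isUnit_iff_isUnit_det _).mp (hinv (i n))
    calc κ ^ (n + 1) ≤ opN (prefixProd A i n) * κ := by
          rw [pow_succ]; exact mul_le_mul_of_nonneg_right ih hκ
      _ = opN (prefixProd A i (n + 1) * (A (i n))⁻¹) * κ := by
          rw [prefixProd_succ, Matrix.mul_nonsing_inv_cancel_right _ _ hdet]
      _ ≤ opN (prefixProd A i (n + 1)) * (κ * opN (A (i n))⁻¹) := by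
          rw [← mul_assoc, mul_right_comm]
          exact mul_le_mul_of_nonneg_right (opN_mul_le _ _) hκ
      _ ≤ opN (prefixProd A i (n + 1)) := mul_le_of_le_one_right (opN_nonneg _) (hκA _)

lemma exists_pow_le_opN_prefixProd (hd : 0 < d) {A : Fin N → Matrix (Fin d) (Fin d) ℝ}
    (hinv : ∀ k, IsUnit (A k)) :
    ∃ κ : ℝ, 0 < κ ∧ κ ≤ 1 ∧ ∀ i n, κ ^ n ≤ opN (prefixProd A i n) := by
  obtain ⟨K, hK1, hK⟩ : ∃ K : ℝ, 1 ≤ K ∧ ∀ k, opN (A k)⁻¹ ≤ K :=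
    ⟨1 + ∑ k, opN (A k)⁻¹, le_add_of_nonneg_right (Finset.sum_nonneg fun k _ => opN_nonneg _),
      fun k => (Finset.single_le_sum (f := fun j => opN (A j)⁻¹) (fun j _ => opN_nonneg _)
        (Finset.mem_univ k)).trans (le_add_of_nonneg_left zero_le_one)⟩
  have hK0 : 0 < K := zero_lt_one.trans_le hK1
  refine ⟨K⁻¹, inv_pos.mpr hK0, inv_le_one_of_one_le₀ hK1,
    pow_le_opN_prefixProd hd hinv (inv_nonneg.mpr hK0.le) fun k => ?_⟩
  rw [inv_mul_le_one₀ hK0]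
  exact hK k

end OperatorNorm

section SymbolicSpace

variable {N : ℕ} {lam : Fin N → ℝ}

lemma le_wedge {i j : ℕ → Fin N} {n : ℕ} (hij : i ≠ j) (hag : ∀ k < n, i k = j k) :
    n ≤ wedge i j :=
  le_csInf (Function.ne_iff.mp hij) fun _ hk => not_lt.mp fun hlt => hk (hag _ hlt)

lemma prod_range_le_pow {ρ : ℝ} (hpos : ∀ k, 0 < lam k) (hρ : ∀ k, lam k ≤ ρ) (i : ℕ → Fin N)
    (n : ℕ) : ∏ k ∈ Finset.range n, lam (i k) ≤ ρ ^ n := by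
  simpa using Finset.prod_le_prod (s := Finset.range n) (fun k _ => (hpos (i k)).le)
    fun k _ => hρ (i k)

variable [MetricSpace (ℕ → Fin N)]

lemma ediam_cylinder_le_prod (hpos : ∀ k, 0 < lam k) (hle : ∀ k, lam k ≤ 1)
    (hdist : ∀ i j : ℕ → Fin N, i ≠ j → dist i j = ∏ k ∈ Finset.range (wedge i j), lam (i k))
    (i : ℕ → Fin N) (n : ℕ) :
    Metric.ediam (PiNat.cylinder i n) ≤ ENNReal.ofReal (∏ k ∈ Finset.range n, lam (i k)) := by
  refine Metric.ediam_le fun x hx y hy => ?_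
  rcases eq_or_ne x y with rfl | hxy
  · simp
  rw [edist_dist, hdist x y hxy]
  refine ENNReal.ofReal_le_ofReal ?_
  have hag : ∀ k < n, x k = y k := fun k hk => (hx k hk).trans (hy k hk).symm
  calc ∏ k ∈ Finset.range (wedge x y), lam (x k) ≤ ∏ k ∈ Finset.range n, lam (x k) :=
        Finset.prod_le_prod_of_subset_of_le_one
          (Finset.range_subset_range.mpr (le_wedge hxy hag)) (fun k _ => (hpos _).le)
          fun k _ _ => hle _
    _ = ∏ k ∈ Finset.range n, lam (i k) :=
        Finset.prod_congr rfl fun k hk => by rw [hx k (Finset.mem_range.mp hk)]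

lemma ediam_cylinder_rpow_le (hpos : ∀ k, 0 < lam k) (hle : ∀ k, lam k ≤ 1)
    (hdist : ∀ i j : ℕ → Fin N, i ≠ j → dist i j = ∏ k ∈ Finset.range (wedge i j), lam (i k))
    (i : ℕ → Fin N) (n : ℕ) {e : ℝ} {s : ℝ≥0} (hes : e ≤ s) :
    Metric.ediam (PiNat.cylinder i n) ^ (s : ℝ)
      ≤ ENNReal.ofReal ((∏ k ∈ Finset.range n, lam (i k)) ^ e) := by
  have hL0 : 0 < ∏ k ∈ Finset.range n, lam (i k) := Finset.prod_pos fun k _ => hpos _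
  calc Metric.ediam (PiNat.cylinder i n) ^ (s : ℝ)
      ≤ ENNReal.ofReal (∏ k ∈ Finset.range n, lam (i k)) ^ (s : ℝ) :=
        ENNReal.rpow_le_rpow (ediam_cylinder_le_prod hpos hle hdist i n) s.coe_nonneg
    _ = ENNReal.ofReal ((∏ k ∈ Finset.range n, lam (i k)) ^ (s : ℝ)) :=
        ENNReal.ofReal_rpow_of_nonneg hL0.le s.coe_nonneg
    _ ≤ ENNReal.ofReal ((∏ k ∈ Finset.range n, lam (i k)) ^ e) :=
        ENNReal.ofReal_le_ofReal (Real.rpow_le_rpow_of_exponent_ge hL0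
          (Finset.prod_le_one (fun k _ => (hpos _).le) fun k _ => hle _) hes)

end SymbolicSpace

lemma ofReal_rpow_le_measure_cylinder {d N : ℕ} {lam : Fin N → ℝ}
    {A : Fin N → Matrix (Fin d) (Fin d) ℝ} {E : (ℕ → Fin N) → Submodule ℝ (Fin d → ℝ)}
    {μ : Measure (ℕ → Fin N)} [IsFiniteMeasure μ] {C C' t p β : ℝ} (hpos : ∀ k, 0 < lam k)
    (hC : 0 < C) (hC' : 0 < C') (ht : 0 ≤ t) {i : ℕ → Fin N} {n : ℕ}
    (hgibbs : C⁻¹ * ((restrNorm (prefixProd A i n) (E (shiftk n i))) ^ t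
      * (∏ k ∈ Finset.range n, lam (i k)) ^ (-p)) ≤ (μ (PiNat.cylinder i n)).toReal)
    (hcomp : C' * opN (prefixProd A i n) ≤ restrNorm (prefixProd A i n) (E (shiftk n i)))
    (hβ : (∏ k ∈ Finset.range n, lam (i k)) ^ β ≤ opN (prefixProd A i n)) :
    ENNReal.ofReal ((∏ k ∈ Finset.range n, lam (i k)) ^ (t * β - p))
      ≤ ENNReal.ofReal (C * (C' ^ t)⁻¹) * μ (PiNat.cylinder i n) := by
  set L := ∏ k ∈ Finset.range n, lam (i k)
  have hL : 0 < L := Finset.prod_pos fun k _ => hpos _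
  have key : C⁻¹ * C' ^ t * L ^ (t * β - p) ≤ (μ (PiNat.cylinder i n)).toReal :=
    calc C⁻¹ * C' ^ t * L ^ (t * β - p) = C⁻¹ * ((C' * L ^ β) ^ t * L ^ (-p)) := by
          rw [Real.mul_rpow hC'.le (Real.rpow_nonneg hL.le β), ← Real.rpow_mul hL.le,
            Real.rpow_sub hL, Real.rpow_neg hL.le, mul_comm β t]
          ring
      _ ≤ C⁻¹ * ((restrNorm (prefixProd A i n) (E (shiftk n i))) ^ t * L ^ (-p)) := by
          gcongr
          exact (mul_le_mul_of_nonneg_left hβ hC'.le).trans hcomp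
      _ ≤ _ := hgibbs
  calc ENNReal.ofReal (L ^ (t * β - p))
      = ENNReal.ofReal (C * (C' ^ t)⁻¹ * (C⁻¹ * C' ^ t * L ^ (t * β - p))) := by
        congr 1; field_simp
    _ ≤ ENNReal.ofReal (C * (C' ^ t)⁻¹ * (μ (PiNat.cylinder i n)).toReal) :=
        ENNReal.ofReal_le_ofReal (mul_le_mul_of_nonneg_left key (by positivity))
    _ = ENNReal.ofReal (C * (C' ^ t)⁻¹) * μ (PiNat.cylinder i n) := by
        rw [ENNReal.ofReal_mul (by positivity), ENNReal.ofReal_toReal (measure_ne_top _ _)]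

theorem stmt5_general {d N : ℕ} (hN : 2 ≤ N)
    (lam : Fin N → ℝ) (hpos : ∀ i, 0 < lam i) (hsum : ∑ i, lam i = 1)
    (A : Fin N → Matrix (Fin d) (Fin d) ℝ) (hinv : ∀ i, IsUnit (A i))
    (E : (ℕ → Fin N) → Submodule ℝ (Fin d → ℝ))
    (hline : ∀ i, ∃ v : Fin d → ℝ, v ≠ 0 ∧ E i = Submodule.span ℝ {v})
    (m : MetricSpace (ℕ → Fin N))
    (hdist : ∀ i j : ℕ → Fin N, i ≠ j →
      m.toDist.dist i j = ∏ k ∈ Finset.range (wedge i j), lam (i k))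
    (P : ℝ → ℝ) (μ : ℝ → Measure (ℕ → Fin N))
    (hprob : ∀ t, IsProbabilityMeasure (μ t))
    (hgibbs : ∀ t : ℝ, ∃ C : ℝ, 1 < C ∧ ∀ (i : ℕ → Fin N) (n : ℕ),
      C⁻¹ * ((restrNorm (prefixProd A i n) (E (shiftk n i))) ^ t
              * (∏ k ∈ Finset.range n, lam (i k)) ^ (-(P t)))
        ≤ (μ t {j : ℕ → Fin N | ∀ k < n, j k = i k}).toReal ∧
      (μ t {j : ℕ → Fin N | ∀ k < n, j k = i k}).toReal
        ≤ C * ((restrNorm (prefixProd A i n) (E (shiftk n i))) ^ t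
              * (∏ k ∈ Finset.range n, lam (i k)) ^ (-(P t))))
    (hcomp : ∃ C' : ℝ, 0 < C' ∧ ∀ (i : ℕ → Fin N) (n : ℕ),
      C' * opN (prefixProd A i n) ≤ restrNorm (prefixProd A i n) (E (shiftk n i)) ∧
      restrNorm (prefixProd A i n) (E (shiftk n i)) ≤ opN (prefixProd A i n)) :
    ∀ (α t : ℝ), 0 ≤ t →
      @dimH _ (@MetricSpace.toEMetricSpace _ m)
        {i : ℕ → Fin N |
          liminf (fun n : ℕ => Real.log (opN (prefixProd A i n))
              / Real.log (∏ k ∈ Finset.range n, lam (i k))) atTop ≤ α}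
        ≤ ENNReal.ofReal (t * α - P t) := by
  intro α t ht
  let _ : MetricSpace (ℕ → Fin N) := m
  have : Nontrivial (Fin N) := Fin.nontrivial_iff_two_le.mpr hN
  obtain ⟨v, hv, -⟩ := hline fun _ => ⟨0, by omega⟩
  have hd : 0 < d := Nat.pos_of_ne_zero (by rintro rfl; exact hv (Subsingleton.elim _ _))
  obtain ⟨C, hC, hg⟩ := hgibbs t
  obtain ⟨C', hC', hc⟩ := hcomp
  obtain ⟨ρ, hρ0, hρ1, hlamρ⟩ := exists_forall_le_lt_one hpos hsum
  have hle : ∀ k, lam k ≤ 1 := fun k => (hlamρ k).trans hρ1.le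
  obtain ⟨κ, hκ0, hκ1, hκ⟩ := exists_pow_le_opN_prefixProd hd hinv
  refine ge_of_tendsto ((ENNReal.continuous_ofReal.comp (by fun_prop : Continuous fun β : ℝ =>
    t * β - P t)).continuousWithinAt (s := Ioi α) (x := α))
    (eventually_nhdsWithin_of_forall fun β hβ => ?_)
  refine dimH_le_of_frequently_ediam_rpow_le_measure_cylinder (μ t)
    (ENNReal.ofReal_lt_one.mpr hρ1) (fun i k => ?_) ENNReal.ofReal_ne_top
    (c := ENNReal.ofReal (C * (C' ^ t)⁻¹)) (s := (t * β - P t).toNNReal) fun i hi => ?_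
  · rw [← ENNReal.ofReal_pow hρ0.le]
    exact (ediam_cylinder_le_prod hpos hle hdist i k).trans
      (ENNReal.ofReal_le_ofReal (prod_range_le_pow hpos hlamρ i k))
  · refine (frequently_rpow_le_of_liminf_log_div_log_lt hκ0 hκ1 hρ0 hρ1 (hκ i)
      (fun n => Finset.prod_pos fun k _ => hpos _) (prod_range_le_pow hpos hlamρ i)
      (lt_of_le_of_lt hi hβ)).mono fun n hn => ?_
    exact (ediam_cylinder_rpow_le hpos hle hdist i n (Real.le_coe_toNNReal _)).trans
      (ofReal_rpow_le_measure_cylinder hpos (zero_lt_one.trans hC) hC' ht (hg i n).1 (hc i n).1 hn)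

/-- Let `μ_t` be Gibbs measures for the potentials
`φ_t(𝐢) = log(‖A_{i₁}|E(σ𝐢)‖ᵗ λ_{i₁}^{-P(t)})`, and assume
`C'‖A_{𝐢|n}‖ ≤ ‖A_{𝐢|n}|E(σⁿ𝐢)‖ ≤ ‖A_{𝐢|n}‖`. Then, with respect to the metric
`d(𝐢,𝐣) = λ_{𝐢|_{𝐢∧𝐣}}`, for every `α ∈ ℝ` and `t ≥ 0` the set
`{𝐢 : liminf_m log‖A_{𝐢|m}‖ / log λ_{𝐢|m} ≤ α}` has Hausdorff dimension at most
`tα - P(t)`. -/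
theorem stmt5 {d N : ℕ} (hN : 2 ≤ N)
    (lam : Fin N → ℝ) (hpos : ∀ i, 0 < lam i) (hsum : ∑ i, lam i = 1)
    (A : Fin N → Matrix (Fin d) (Fin d) ℝ) (hinv : ∀ i, IsUnit (A i))
    (hcontr : ∀ i, opN (A i) < 1)
    (E : (ℕ → Fin N) → Submodule ℝ (Fin d → ℝ))
    (hline : ∀ i, ∃ v : Fin d → ℝ, v ≠ 0 ∧ E i = Submodule.span ℝ {v})
    (hequi : ∀ i : ℕ → Fin N,
      E i = (E (shiftk 1 i)).map (Matrix.mulVecLin (A (i 0))))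
    (m : MetricSpace (ℕ → Fin N))
    (hdist : ∀ i j : ℕ → Fin N, i ≠ j →
      m.toDist.dist i j = ∏ k ∈ Finset.range (wedge i j), lam (i k))
    (P : ℝ → ℝ) (μ : ℝ → Measure (ℕ → Fin N))
    (hprob : ∀ t, IsProbabilityMeasure (μ t))
    (hgibbs : ∀ t : ℝ, ∃ C : ℝ, 1 < C ∧ ∀ (i : ℕ → Fin N) (n : ℕ),
      C⁻¹ * ((restrNorm (prefixProd A i n) (E (shiftk n i))) ^ t
              * (∏ k ∈ Finset.range n, lam (i k)) ^ (-(P t)))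
        ≤ (μ t {j : ℕ → Fin N | ∀ k < n, j k = i k}).toReal ∧
      (μ t {j : ℕ → Fin N | ∀ k < n, j k = i k}).toReal
        ≤ C * ((restrNorm (prefixProd A i n) (E (shiftk n i))) ^ t
              * (∏ k ∈ Finset.range n, lam (i k)) ^ (-(P t))))
    (hcomp : ∃ C' : ℝ, 0 < C' ∧ ∀ (i : ℕ → Fin N) (n : ℕ),
      C' * opN (prefixProd A i n) ≤ restrNorm (prefixProd A i n) (E (shiftk n i)) ∧
      restrNorm (prefixProd A i n) (E (shiftk n i)) ≤ opN (prefixProd A i n)) :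
    ∀ (α t : ℝ), 0 ≤ t →
      @dimH _ (@MetricSpace.toEMetricSpace _ m)
        {i : ℕ → Fin N |
          liminf (fun n : ℕ => Real.log (opN (prefixProd A i n))
              / Real.log (∏ k ∈ Finset.range n, lam (i k))) atTop ≤ α}
        ≤ ENNReal.ofReal (t * α - P t) :=
  stmt5_general hN lam hpos hsum A hinv E hline m hdist P μ hprob hgibbs hcomp
end

section
/- Let $B_{n,l,m,0} \subseteq \Sigma$ be sets satisfying $B_{n,l,m,0} \subseteq \bigcup_{|\overline{\imath}|=q} \varrho_{\overline{\imath}}(B_{n,l,m,0})$ for all $q\geq 1$ (where $\varrho_{\overline{\imath}}(\mathbf{i}) = \overline{\imath}\mathbf{i}$ is prepending), and suppose there exist $n_0, l_0, m_0$ and a word $\overline{\jmath}$ of length $l_0$ with $B_{n_0,l_0,m_0,0} \cap [\overline{\jmath}] = \emptyset$ and such that $B_{n_0,l_0,m_0,0} \subseteq \bigcup_{|\overline{\imath}|=l_0, \overline{\imath}\neq\overline{\jmath}} \varrho_{\overline{\imath}}(B_{n_0,l_0,m_0,0})$. Then for every $\mathbf{i} \in B_{n_0,l_0,m_0,0}$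 and every $p \geq 1$, $\sigma^p\mathbf{i} \notin [\overline{\jmath}]$. Consequently, any fully supported ergodic shift-invariant measure $\nu$ satisfies $\nu(B_{n_0,l_0,m_0,0}) = 0$. -/
open MeasureTheory Set

/-- The left shift on `Σ = {0,…,N-1}^ℕ`. -/
def shift {N : ℕ} (i : ℕ → Fin N) : ℕ → Fin N := fun m => i (m + 1)

/-- Prepending a finite word `w` of length `q` to a sequence. -/
def prepend {N q : ℕ} (w : Fin q → Fin N) (i : ℕ → Fin N) : ℕ → Fin N :=
  fun m => if h : m < q then w ⟨m, h⟩ else i (m - q)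

/-!
The self-covering `B ⊆ ⋃_{|ī|=q} ī B` says exactly that `σ^q` maps `B` into itself, so an orbit
starting in `B` never meets `[ȷ̄]`. On the other hand, for an ergodic map the set of points whose
forward orbit avoids a set of positive measure is forward invariant and misses that set's
preimage, hence is null.
-/

namespace MeasureTheory.Ergodic

variable {α : Type*} [MeasurableSpace α] {f : α → α} {μ : Measure α}

theorem measure_setOf_forall_iterate_notMem_eq_zero [IsFiniteMeasure μ] (hf : Ergodic f μ)
    {s : Set α} (hs : MeasurableSet s) (hμs : μ s ≠ 0) :
    μ {x | ∀ p, 1 ≤ p → f^[p] x ∉ s} = 0 := by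
  set C := {x | ∀ p, 1 ≤ p → f^[p] x ∉ s}
  have hC : MeasurableSet C := by
    have : C = ⋂ p ∈ Ici 1, f^[p] ⁻¹' sᶜ := by ext; simp [C]
    rw [this]
    exact .biInter (to_countable _) fun p _ => hf.measurable.iterate p hs.compl
  have hC_invariant : C ⊆ f ⁻¹' C := fun x hx p hp => by
    simpa only [Function.iterate_succ_apply] using hx (p + 1) (by omega)
  rcases hf.ae_empty_or_univ_of_ae_le_preimage' hC.nullMeasurableSet
    hC_invariant.eventuallyLE (measure_ne_top μ C) with h | h
  · simpa using measure_congr h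
  · have hCc : μ Cᶜ = 0 := ae_eq_univ.mp h
    have : f ⁻¹' s ⊆ Cᶜ := fun x hx hxC => hxC 1 le_rfl hx
    exact absurd (hf.measure_preimage hs.nullMeasurableSet ▸ measure_mono_null this hCc) hμs

end MeasureTheory.Ergodic

lemma shift_iterate_apply {N : ℕ} (p : ℕ) (i : ℕ → Fin N) (m : ℕ) :
    (shift^[p] i) m = i (m + p) := by
  induction p generalizing i with
  | zero => rfl
  | succ p ih =>
    rw [Function.iterate_succ_apply, ih]
    exact congrArg i (by omega)

lemma shift_iterate_prepend {N p : ℕ} (w : Fin p → Fin N) (j : ℕ → Fin N) :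
    shift^[p] (prepend w j) = j := by
  funext m
  rw [shift_iterate_apply, prepend, dif_neg (by omega)]
  exact congrArg j (by omega)

lemma measurableSet_cylinder {N n : ℕ} (w : Fin n → Fin N) :
    MeasurableSet {i : ℕ → Fin N | ∀ k : Fin n, i k = w k} := by
  have : {i : ℕ → Fin N | ∀ k : Fin n, i k = w k} = ⋂ k : Fin n, (fun i => i k) ⁻¹' {w k} := by
    ext; simp
  rw [this]
  exact .iInter fun k => measurable_pi_apply _ (measurableSet_singleton _)

lemma shift_iterate_mem_of_subset_iUnion_prepend {N : ℕ} {B : Set (ℕ → Fin N)}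
    (hB : ∀ q : ℕ, 1 ≤ q → B ⊆ ⋃ w : Fin q → Fin N, prepend w '' B)
    {i : ℕ → Fin N} (hi : i ∈ B) {p : ℕ} (hp : 1 ≤ p) : shift^[p] i ∈ B := by
  obtain ⟨-, ⟨w, rfl⟩, j, hj, rfl⟩ := hB p hp hi
  rwa [shift_iterate_prepend]

theorem stmt11_general {N : ℕ} (B : Set (ℕ → Fin N))
    (hq : ∀ q : ℕ, 1 ≤ q → B ⊆ ⋃ w : Fin q → Fin N, prepend w '' B)
    (l0 : ℕ) (jb : Fin l0 → Fin N)
    (hdisj : B ∩ {i | ∀ k : Fin l0, i k = jb k} = ∅) :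
    (∀ i ∈ B, ∀ p : ℕ, 1 ≤ p → ¬ (∀ k : Fin l0, (shift^[p] i) k = jb k)) ∧
    ∀ ν : Measure (ℕ → Fin N), IsProbabilityMeasure ν → Ergodic shift ν →
      (∀ (n : ℕ) (w : Fin n → Fin N), 0 < ν {i | ∀ k : Fin n, i k = w k}) →
      ν B = 0 := by
  have avoids : ∀ i ∈ B, ∀ p : ℕ, 1 ≤ p → ¬ (∀ k : Fin l0, (shift^[p] i) k = jb k) :=
    fun i hi p hp hcyl =>
      hdisj.subset ⟨shift_iterate_mem_of_subset_iUnion_prepend hq hi hp, hcyl⟩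
  exact ⟨avoids, fun ν _ herg hfull => measure_mono_null (fun i hi p hp => avoids i hi p hp)
    (herg.measure_setOf_forall_iterate_notMem_eq_zero (measurableSet_cylinder jb)
      (hfull l0 jb).ne')⟩

/-- If `B ⊆ Σ` satisfies `B ⊆ ⋃_{|ī|=q} ī B` for all `q`, and for some
word `ȷ̄` of length `l₀` we have `B ∩ [ȷ̄] = ∅` and `B ⊆ ⋃_{|ī|=l₀, ī≠ȷ̄} ī B`, then no
shift-iterate of a point of `B` enters `[ȷ̄]`, and every fully supported ergodic
shift-invariant probability measure gives `B` measure zero. -/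
theorem stmt11 {N : ℕ} (hN : 1 ≤ N) (B : Set (ℕ → Fin N))
    (hq : ∀ q : ℕ, 1 ≤ q → B ⊆ ⋃ w : Fin q → Fin N, prepend w '' B)
    (l0 : ℕ) (hl0 : 1 ≤ l0) (jb : Fin l0 → Fin N)
    (hdisj : B ∩ {i | ∀ k : Fin l0, i k = jb k} = ∅)
    (hsub : B ⊆ ⋃ w : {w : Fin l0 → Fin N // w ≠ jb}, prepend w.1 '' B) :
    (∀ i ∈ B, ∀ p : ℕ, 1 ≤ p → ¬ (∀ k : Fin l0, (shift^[p] i) k = jb k)) ∧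
    ∀ ν : Measure (ℕ → Fin N), IsProbabilityMeasure ν → Ergodic shift ν →
      (∀ (n : ℕ) (w : Fin n → Fin N), 0 < ν {i | ∀ k : Fin n, i k = w k}) →
      ν B = 0 :=
  stmt11_general B hq l0 jb hdisj
end

section
/- For $\omega\in(0,1/3)$ and $0<\delta<1$, let $\widehat{D}_\delta = \begin{pmatrix}1 & -\delta\\ -\delta & 1\end{pmatrix}$ and $A_0 = \begin{pmatrix}\omega & 0\\ \omega & 1-2\omega\end{pmatrix}$, $A_1 = \begin{pmatrix}1-2\omega & \omega\\ 0 & \omega\end{pmatrix}$. Then $\widehat{D}_\delta^{-1} A_0 \widehat{D}_\delta$ and $\widehat{D}_\delta^{-1} A_1 \widehat{D}_\delta$ have all entries strictly positive whenever $\frac{\delta}{1+3\delta} < \omega < \frac{1}{3+\delta}$. -/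
/-- de Rham matrices conjugated by `D̂ δ` have strictly positive entries
when `δ/(1+3δ) < ω < 1/(3+δ)` and `0 < δ < 1`. -/
theorem stmt15 (ω δ : ℝ) (hδ0 : 0 < δ) (hδ1 : δ < 1)
    (hlow : δ / (1 + 3 * δ) < ω) (hup : ω < 1 / (3 + δ)) :
    let D : Matrix (Fin 2) (Fin 2) ℝ := !![1, -δ; -δ, 1]
    let A0 : Matrix (Fin 2) (Fin 2) ℝ := !![ω, 0; ω, 1 - 2 * ω]
    let A1 : Matrix (Fin 2) (Fin 2) ℝ := !![1 - 2 * ω, ω; 0, ω]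
    (∀ i j, 0 < (D⁻¹ * A0 * D) i j) ∧ (∀ i j, 0 < (D⁻¹ * A1 * D) i j) := by
  intro D A0 A1
  have hd : (0:ℝ) < 1 - δ ^ 2 := by nlinarith
  have hlow' : δ < ω * (1 + 3 * δ) := by
    rw [div_lt_iff₀ (by linarith)] at hlow; linarith
  have hup' : ω * (3 + δ) < 1 := by
    rw [lt_div_iff₀ (by linarith)] at hup; linarith
  have hDinv : D⁻¹ = (1 - δ ^ 2)⁻¹ • !![1, δ; δ, 1] := by
    apply Matrix.inv_eq_right_inv
    show D * _ = 1
    rw [Matrix.mul_smul]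
    ext i j
    fin_cases i <;> fin_cases j <;>
      simp [D, Matrix.mul_apply, Fin.sum_univ_two] <;>
      field_simp <;> ring
  have e0 : D⁻¹ * A0 * D = (1 - δ ^ 2)⁻¹ •
      !![ω + δ * ω - δ ^ 2 + 2 * δ ^ 2 * ω, δ * (1 - 3 * ω - δ * ω);
         ω * (1 + 3 * δ) - δ, 1 - 2 * ω - δ * ω - δ ^ 2 * ω] := by
    rw [hDinv, Matrix.smul_mul, Matrix.smul_mul]
    congr 1
    ext i j
    fin_cases i <;> fin_cases j <;>
      simp [D, A0, Matrix.mul_apply, Fin.sum_univ_two] <;> ring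
  have e1 : D⁻¹ * A1 * D = (1 - δ ^ 2)⁻¹ •
      !![1 - 2 * ω - δ * ω - δ ^ 2 * ω, ω * (1 + 3 * δ) - δ;
         δ * (1 - 3 * ω - δ * ω), ω + δ * ω - δ ^ 2 + 2 * δ ^ 2 * ω] := by
    rw [hDinv, Matrix.smul_mul, Matrix.smul_mul]
    congr 1
    ext i j
    fin_cases i <;> fin_cases j <;>
      simp [D, A1, Matrix.mul_apply, Fin.sum_univ_two] <;> ring
  have hinv : (0:ℝ) < (1 - δ ^ 2)⁻¹ := inv_pos.mpr hd
  constructor <;> intro i j <;> [rw [e0]; rw [e1]] <;>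
    fin_cases i <;> fin_cases j <;> simp <;>
    apply mul_pos hinv <;> nlinarith
end
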